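/- With the chart φ_{B,B^⊥}(A) = q(B + A B^⊥) on the Grassmannian of hyperplanes, where B = (I_n | 0) and B^⊥ = (0 … 0 1), the map f(x,y,z,A) = ((B+AB^⊥)ᵀ x + z, (B+AB^⊥)ᵀ y) from ℝⁿ × ℝⁿ × ℝ^{n+1} × M_{n×1}(ℝ) to ℝ^{n+1} × ℝ^{n+1} has derivative of rank 2n+2 at (x,y,z,A) if y ≠ 0, and rank 2n+1 if y = 0. -/

import Mathlib

/-!
The derivative at `(x, y, z, A)` is
`(h₁, h₂, h₃, h₄) ↦ ((h₁, A ⬝ᵥ h₁ + h₄ ⬝ᵥ x) + h₃, (h₂, A ⬝ᵥ h₂ + h₄ ⬝ᵥ y))`.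
The free `z`-direction `h₃` fills the whole first factor `ℝ^{n+1}`, so the rank is `n + 1` plus
the rank of the second component `(h₂, h₄) ↦ (h₂, A ⬝ᵥ h₂ + h₄ ⬝ᵥ y)`. When `y ≠ 0` the direction
`h₄` moves the last coordinate freely and this component is onto `ℝ^{n+1}`; when `y = 0` it is the
injective map `h₂ ↦ (h₂, A ⬝ᵥ h₂)`, of rank `n`.
-/

/-- The map `f(x,y,z,A) = ((B+AB^⊥)ᵀ x + z, (B+AB^⊥)ᵀ y)` with `B = (I_n | 0)`,
`B^⊥ = (0,…,0,1)`, `A ∈ M_{n×1}(ℝ)` (identified with a vector of `ℝⁿ`):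
here `(B+AB^⊥)ᵀ v = (v, ⟨A, v⟩) ∈ ℝ^{n+1}`. -/
noncomputable def grassAux (n : ℕ) :
    (Fin n → ℝ) × (Fin n → ℝ) × (Fin (n + 1) → ℝ) × (Fin n → ℝ) →
      (Fin (n + 1) → ℝ) × (Fin (n + 1) → ℝ) :=
  fun p =>
    (Fin.snoc p.1 (∑ i, p.2.2.2 i * p.1 i) + p.2.2.1,
      Fin.snoc p.2.1 (∑ i, p.2.2.2 i * p.2.1 i))

open Matrix LinearMap Module

namespace Fin

@[simp]
theorem snoc_zero_zero {α : Type*} [Zero α] {n : ℕ} : (Fin.snoc 0 0 : Fin (n + 1) → α) = 0 := by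
  ext i
  induction i using Fin.lastCases <;> simp

section Field

variable {K : Type*} [Field K] {n : ℕ}

theorem exists_snoc_dotProduct_eq (A : Fin n → K) {y : Fin n → K} (hy : y ≠ 0)
    (w : Fin (n + 1) → K) : ∃ u B : Fin n → K, Fin.snoc u (A ⬝ᵥ u + B ⬝ᵥ y) = w := by
  obtain ⟨j, hj⟩ := Function.ne_iff.1 hy
  refine ⟨Fin.init w, Pi.single j ((w (Fin.last n) - A ⬝ᵥ Fin.init w) / y j), ?_⟩
  rw [single_dotProduct, div_mul_cancel₀ _ hj, add_sub_cancel, Fin.snoc_init_self]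

def snocDotProductLinearMap (A : Fin n → K) : (Fin n → K) →ₗ[K] (Fin (n + 1) → K) where
  toFun v := Fin.snoc v (A ⬝ᵥ v)
  map_add' u v := by ext i; induction i using Fin.lastCases <;> simp [dotProduct_add]
  map_smul' c v := by ext i; induction i using Fin.lastCases <;> simp [dotProduct_smul]

theorem snocDotProductLinearMap_injective (A : Fin n → K) :
    Function.Injective (snocDotProductLinearMap A) :=
  fun u v h => by simpa [snocDotProductLinearMap] using congrArg Fin.init h

theorem finrank_range_snocDotProductLinearMap (A : Fin n → K) :
    finrank K (range (snocDotProductLinearMap A)) = n := by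
  rw [finrank_range_of_inj (snocDotProductLinearMap_injective A), finrank_fin_fun]

end Field

section Normed

variable (𝕜 : Type*) [NontriviallyNormedField 𝕜]

def snocCLM (n : ℕ) : (Fin n → 𝕜) × 𝕜 →L[𝕜] (Fin (n + 1) → 𝕜) :=
  ContinuousLinearMap.pi <| Fin.snoc
    (fun i => (ContinuousLinearMap.proj i).comp (ContinuousLinearMap.fst 𝕜 _ _))
    (ContinuousLinearMap.snd 𝕜 _ _)

@[simp]
theorem snocCLM_apply {n : ℕ} (p : (Fin n → 𝕜) × 𝕜) : snocCLM 𝕜 n p = Fin.snoc p.1 p.2 := by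
  ext i
  induction i using Fin.lastCases <;> simp [snocCLM]

end Normed

end Fin

section Calculus

variable {𝕜 E : Type*} [NontriviallyNormedField 𝕜] [NormedAddCommGroup E] [NormedSpace 𝕜 E]
  {n : ℕ} {x : E}

theorem HasFDerivAt.finSnoc {f : E → Fin n → 𝕜} {g : E → 𝕜} {f' : E →L[𝕜] Fin n → 𝕜}
    {g' : E →L[𝕜] 𝕜} (hf : HasFDerivAt f f' x) (hg : HasFDerivAt g g' x) :
    HasFDerivAt (fun y => (Fin.snoc (f y) (g y) : Fin (n + 1) → 𝕜))
      ((Fin.snocCLM 𝕜 n).comp (f'.prod g')) x := by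
  simpa using (Fin.snocCLM 𝕜 n).hasFDerivAt.comp x (hf.prodMk hg)

theorem HasFDerivAt.dotProduct {f g : E → Fin n → 𝕜} {f' g' : E →L[𝕜] Fin n → 𝕜}
    (hf : HasFDerivAt f f' x) (hg : HasFDerivAt g g' x) :
    HasFDerivAt (fun y => f y ⬝ᵥ g y)
      (∑ i, (f x i • (ContinuousLinearMap.proj i).comp g' +
        g x i • (ContinuousLinearMap.proj i).comp f')) x :=
  HasFDerivAt.fun_sum fun i _ =>
    ((hasFDerivAt_apply (𝕜 := 𝕜) i (f x)).comp x hf).fun_mul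
      ((hasFDerivAt_apply (𝕜 := 𝕜) i (g x)).comp x hg)

end Calculus

theorem LinearMap.finrank_range_eq_add_of_range_inl_le {K M P Q : Type*} [Field K]
    [AddCommGroup M] [Module K M] [AddCommGroup P] [Module K P] [AddCommGroup Q] [Module K Q]
    [FiniteDimensional K P] [FiniteDimensional K Q] {D : M →ₗ[K] P × Q}
    (hD : range (inl K P Q) ≤ range D) :
    finrank K (range D) = finrank K P + finrank K (range (snd K P Q ∘ₗ D)) := by
  set W := range (snd K P Q ∘ₗ D)
  have hrange : range D = range ((LinearMap.id : P →ₗ[K] P).prodMap W.subtype) := by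
    rw [range_prodMap, range_id, Submodule.range_subtype]
    ext ⟨p, q⟩
    refine ⟨fun ⟨m, hm⟩ => ⟨trivial, ⟨m, by simp [hm]⟩⟩, fun ⟨_, ⟨m, hm⟩⟩ => ?_⟩
    obtain ⟨m', hm'⟩ := hD ⟨p - (D m).1, rfl⟩
    refine ⟨m + m', ?_⟩
    simp_all [Prod.ext_iff]
  rw [hrange, finrank_range_of_inj (Function.injective_id.prodMap Subtype.val_injective),
    finrank_prod]

section GrassAux

variable {n : ℕ} (x y : Fin n → ℝ) (z : Fin (n + 1) → ℝ) (A : Fin n → ℝ)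

theorem fderiv_grassAux_apply
    (h : (Fin n → ℝ) × (Fin n → ℝ) × (Fin (n + 1) → ℝ) × (Fin n → ℝ)) :
    fderiv ℝ (grassAux n) (x, y, z, A) h =
      (Fin.snoc h.1 (A ⬝ᵥ h.1 + h.2.2.2 ⬝ᵥ x) + h.2.2.1,
        Fin.snoc h.2.1 (A ⬝ᵥ h.2.1 + h.2.2.2 ⬝ᵥ y)) := by
  have hx := hasFDerivAt_fst (𝕜 := ℝ) (p := (x, y, z, A))
  have hy := (hasFDerivAt_snd (𝕜 := ℝ) (p := (x, y, z, A))).fst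
  have hz := (hasFDerivAt_snd (𝕜 := ℝ) (p := (x, y, z, A))).snd.fst
  have hA := (hasFDerivAt_snd (𝕜 := ℝ) (p := (x, y, z, A))).snd.snd
  have hf : HasFDerivAt (grassAux n) _ (x, y, z, A) :=
    ((hx.finSnoc (hA.dotProduct hx)).fun_add hz).prodMk (hy.finSnoc (hA.dotProduct hy))
  rw [hf.fderiv]
  simp [dotProduct, Finset.sum_add_distrib, mul_comm]

theorem range_inl_le_range_fderiv_grassAux :
    range (inl ℝ (Fin (n + 1) → ℝ) (Fin (n + 1) → ℝ)) ≤
      range (fderiv ℝ (grassAux n) (x, y, z, A)).toLinearMap := by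
  rintro _ ⟨p, rfl⟩
  exact ⟨(0, 0, p, 0), by simp [fderiv_grassAux_apply]⟩

theorem range_snd_comp_fderiv_grassAux_of_ne_zero (hy : y ≠ 0) :
    range (snd ℝ _ _ ∘ₗ (fderiv ℝ (grassAux n) (x, y, z, A)).toLinearMap) = ⊤ := by
  refine eq_top_iff.2 fun w _ => ?_
  obtain ⟨u, B, rfl⟩ := Fin.exists_snoc_dotProduct_eq A hy w
  exact ⟨(0, u, 0, B), by simp [fderiv_grassAux_apply]⟩

theorem range_snd_comp_fderiv_grassAux_zero :
    range (snd ℝ _ _ ∘ₗ (fderiv ℝ (grassAux n) (x, 0, z, A)).toLinearMap) =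
      range (Fin.snocDotProductLinearMap A) := by
  ext w
  constructor
  · rintro ⟨h, rfl⟩
    exact ⟨h.2.1, by simp [fderiv_grassAux_apply, Fin.snocDotProductLinearMap]⟩
  · rintro ⟨u, rfl⟩
    exact ⟨(0, u, 0, 0), by simp [fderiv_grassAux_apply, Fin.snocDotProductLinearMap]⟩

end GrassAux

/-- The derivative of `f(x,y,z,A) = ((B+AB^⊥)ᵀx + z, (B+AB^⊥)ᵀy)` has rank
`2n+2` at `(x,y,z,A)` when `y ≠ 0`, and rank `2n+1` when `y = 0`. -/
theorem stmt7 (n : ℕ) (x y : Fin n → ℝ) (z : Fin (n + 1) → ℝ) (A : Fin n → ℝ) :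
    Module.finrank ℝ (LinearMap.range (fderiv ℝ (grassAux n) (x, y, z, A)).toLinearMap) =
      if y ≠ 0 then 2 * n + 2 else 2 * n + 1 := by
  rw [finrank_range_eq_add_of_range_inl_le (range_inl_le_range_fderiv_grassAux x y z A),
    finrank_fin_fun]
  split_ifs with hy
  · rw [range_snd_comp_fderiv_grassAux_of_ne_zero x y z A hy, finrank_top, finrank_fin_fun]
    ring
  · rw [not_not.1 hy, range_snd_comp_fderiv_grassAux_zero,
      Fin.finrank_range_snocDotProductLinearMap]
    ring
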